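/- Let λ ≠ 1 be an eigenvalue of A_n. Then the vector v ∈ ℂⁿ with entries v_j = Y(j) = Σ_{k ≥ 0} d(j,k)(λ−1)^{−k} for 1 ≤ j ≤ n is nonzero and satisfies A_nᵀ v = λ v; moreover it spans the one-dimensional λ-eigenspace of A_nᵀ. -/

import Mathlib

/-- The Dirichlet matrix `D_n` attached to the coefficient sequence `a`. -/
def Dmat (n : ℕ) (a : ℕ → ℂ) : Matrix (Fin n) (Fin n) ℂ :=
  fun i j => if (i.val + 1) ∣ (j.val + 1) then a ((j.val + 1) / (i.val + 1)) else 0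

/-- The weight matrix `W_n`: `(i,1)` entry `w i` for `2 ≤ i ≤ n`, other entries `0`. -/
def Wmat (n : ℕ) (w : ℕ → ℂ) : Matrix (Fin n) (Fin n) ℂ :=
  fun i j => if j.val = 0 ∧ i.val ≠ 0 then w (i.val + 1) else 0

/-- `A_n = W_n + D_n`. -/
def Amat (n : ℕ) (a w : ℕ → ℂ) : Matrix (Fin n) (Fin n) ℂ :=
  Wmat n w + Dmat n a

/-- `dcoef a m k`: the sum of `∏ a ℓᵢ` over `k`-tuples of integers `ℓᵢ ≥ 2`
with product `m`. -/
noncomputable def dcoef (a : ℕ → ℂ) (m k : ℕ) : ℂ :=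
  ∑ t ∈ (Fintype.piFinset fun _ : Fin k => Finset.Icc 2 m).filter
      (fun t => ∏ i, t i = m), ∏ i, a (t i)

/-- `Y(j) = ∑_{k ≥ 0} d(j,k) (λ-1)^{-k}`; the sum has finitely many nonzero terms
since `d(j,k) = 0` for `k > log₂ j`. -/
noncomputable def Yfun (a : ℕ → ℂ) (lam : ℂ) (j : ℕ) : ℂ :=
  ∑' k : ℕ, dcoef a j k * (lam - 1) ^ (-(k : ℤ))

/-!
Splitting off the first factor of an ordered factorization gives `Y(1) = 1` and
`(λ - 1) Y(m) = ∑_{d ∣ m, d < m} a(m/d) Y(d)` for `m ≥ 2`. Since `W_n` only meets the first row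
of `A_nᵀ`, the rows `m ≥ 2` of `A_nᵀ x = λ x` are exactly this recursion for `x`, so every
solution is `x₁ • Y`. As `A_nᵀ` has the spectrum of `A_n`, a nonzero solution exists; it has
`x₁ ≠ 0`, and dividing by `x₁` shows that `Y` itself is an eigenvector.
-/

open Finset Matrix

theorem Matrix.exists_transpose_mulVec_eq_smul_of_mem_spectrum {K ι : Type*} [Field K]
    [Fintype ι] [DecidableEq ι] {A : Matrix ι ι K} {μ : K} (h : μ ∈ spectrum K A) :
    ∃ x ≠ 0, Aᵀ *ᵥ x = μ • x := by
  rw [mem_spectrum_iff_isRoot_charpoly, ← charpoly_transpose, ← mem_spectrum_iff_isRoot_charpoly,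
    ← spectrum_toLin', ← Module.End.hasEigenvalue_iff_mem_spectrum] at h
  obtain ⟨x, hx⟩ := h.exists_hasEigenvector
  exact ⟨x, hx.2, by simpa using hx.apply_eq_smul⟩

theorem prod_pos_of_forall_two_le {k : ℕ} {t : Fin k → ℕ} (h : ∀ i, 2 ≤ t i) : 0 < ∏ i, t i :=
  prod_pos fun i _ => lt_of_lt_of_le two_pos (h i)

def orderedFactorizations (m k : ℕ) : Finset (Fin k → ℕ) :=
  (Fintype.piFinset fun _ : Fin k => Icc 2 m).filter fun t => ∏ i, t i = m

theorem mem_orderedFactorizations {m k : ℕ} {t : Fin k → ℕ} :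
    t ∈ orderedFactorizations m k ↔ (∀ i, 2 ≤ t i) ∧ ∏ i, t i = m := by
  simp only [orderedFactorizations, mem_filter, Fintype.mem_piFinset, mem_Icc]
  refine ⟨fun h => ⟨fun i => (h.1 i).1, h.2⟩, fun ⟨h2, hprod⟩ => ⟨fun i => ⟨h2 i, ?_⟩, hprod⟩⟩
  exact Nat.le_of_dvd (hprod ▸ prod_pos_of_forall_two_le h2)
    (hprod ▸ dvd_prod_of_mem t (mem_univ i))

theorem dcoef_eq_sum_orderedFactorizations (a : ℕ → ℂ) (m k : ℕ) :
    dcoef a m k = ∑ t ∈ orderedFactorizations m k, ∏ i, a (t i) :=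
  rfl

theorem dcoef_zero (a : ℕ → ℂ) (m : ℕ) : dcoef a m 0 = if m = 1 then 1 else 0 := by
  split_ifs with h <;>
    simp [dcoef_eq_sum_orderedFactorizations, orderedFactorizations, h, eq_comm]

theorem dcoef_eq_zero_of_lt_two_pow (a : ℕ → ℂ) {m k : ℕ} (h : m < 2 ^ k) : dcoef a m k = 0 := by
  refine sum_eq_zero fun t ht => absurd h (not_lt.mpr ?_)
  obtain ⟨h2, rfl⟩ := mem_orderedFactorizations.mp ht
  simpa using prod_le_prod' (s := univ) fun i _ => h2 i

theorem eq_head_mul_prod_tail_of_mem_orderedFactorizations {m k : ℕ} {t : Fin (k + 1) → ℕ}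
    (ht : t ∈ orderedFactorizations m (k + 1)) : m = t 0 * ∏ i, Fin.tail t i := by
  rw [← (mem_orderedFactorizations.mp ht).2, Fin.prod_univ_succ]
  rfl

theorem div_prod_tail_eq_head_of_mem_orderedFactorizations {m k : ℕ} {t : Fin (k + 1) → ℕ}
    (ht : t ∈ orderedFactorizations m (k + 1)) : m / ∏ i, Fin.tail t i = t 0 := by
  have hpos : 0 < ∏ i, Fin.tail t i :=
    prod_pos_of_forall_two_le fun i => (mem_orderedFactorizations.mp ht).1 i.succ
  rw [eq_head_mul_prod_tail_of_mem_orderedFactorizations ht, Nat.mul_div_cancel _ hpos]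

theorem dcoef_succ (a : ℕ → ℂ) (m k : ℕ) :
    dcoef a m (k + 1) = ∑ d ∈ m.properDivisors, a (m / d) * dcoef a d k := by
  simp only [dcoef_eq_sum_orderedFactorizations, mul_sum]
  rw [sum_sigma']
  refine sum_bij' (fun t _ => ⟨∏ i, Fin.tail t i, Fin.tail t⟩)
    (fun p _ => Fin.cons (m / p.1) p.2) ?_ ?_ ?_ ?_ ?_
  · intro t ht
    have hm := eq_head_mul_prod_tail_of_mem_orderedFactorizations ht
    obtain ⟨h2, -⟩ := mem_orderedFactorizations.mp ht
    simp only [mem_sigma, Nat.mem_properDivisors, mem_orderedFactorizations]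
    refine ⟨⟨Dvd.intro_left _ hm.symm, ?_⟩, fun i => h2 i.succ, trivial⟩
    rw [hm]
    exact (Nat.lt_mul_iff_one_lt_left (prod_pos_of_forall_two_le fun i => h2 i.succ)).mpr (h2 0)
  · rintro ⟨d, s⟩ hp
    simp only [mem_sigma, Nat.mem_properDivisors, mem_orderedFactorizations] at hp ⊢
    obtain ⟨⟨⟨c, rfl⟩, hlt⟩, hs, rfl⟩ := hp
    have hpos := prod_pos_of_forall_two_le hs
    have hc : 1 < c := (Nat.lt_mul_iff_one_lt_right hpos).mp hlt
    rw [Nat.mul_div_cancel_left _ hpos, Fin.prod_univ_succ]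
    exact ⟨Fin.cases hc hs, by simp [mul_comm]⟩
  · intro t ht
    rw [div_prod_tail_eq_head_of_mem_orderedFactorizations ht, Fin.cons_self_tail]
  · rintro ⟨d, s⟩ hp
    simp only [mem_sigma, mem_orderedFactorizations] at hp
    simp [hp.2.2]
  · intro t ht
    rw [Fin.prod_univ_succ, div_prod_tail_eq_head_of_mem_orderedFactorizations ht]
    rfl

theorem Yfun_eq_sum (a : ℕ → ℂ) (lam : ℂ) {m N : ℕ} (h : m < N) :
    Yfun a lam m = ∑ k ∈ range N, dcoef a m k * (lam - 1) ^ (-(k : ℤ)) := by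
  refine tsum_eq_sum fun k hk => ?_
  have : m < 2 ^ k := by have := k.lt_two_pow_self; simp only [mem_range] at hk; omega
  rw [dcoef_eq_zero_of_lt_two_pow a this, zero_mul]

theorem Yfun_one (a : ℕ → ℂ) (lam : ℂ) : Yfun a lam 1 = 1 := by
  rw [Yfun_eq_sum a lam (Nat.lt_succ_self 1), sum_range_succ, sum_range_one, dcoef_zero,
    dcoef_eq_zero_of_lt_two_pow a (by norm_num)]
  simp

theorem Yfun_rec (a : ℕ → ℂ) {lam : ℂ} (hlam : lam ≠ 1) {m : ℕ} (hm : 2 ≤ m) :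
    (lam - 1) * Yfun a lam m = ∑ d ∈ m.properDivisors, a (m / d) * Yfun a lam d := by
  have hμ : lam - 1 ≠ 0 := sub_ne_zero.mpr hlam
  calc (lam - 1) * Yfun a lam m
      = ∑ k ∈ range m, dcoef a m (k + 1) * (lam - 1) ^ (-(k : ℤ)) := by
        rw [Yfun_eq_sum a lam m.lt_succ_self, sum_range_succ', dcoef_zero, if_neg (by omega),
          zero_mul, add_zero, mul_sum]
        refine sum_congr rfl fun k _ => ?_
        rw [mul_left_comm, ← zpow_one_add₀ hμ]
        push_cast
        ring_nf
    _ = ∑ d ∈ m.properDivisors, ∑ k ∈ range m,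
          a (m / d) * (dcoef a d k * (lam - 1) ^ (-(k : ℤ))) := by
        simp_rw [dcoef_succ, sum_mul, mul_assoc]
        exact sum_comm
    _ = ∑ d ∈ m.properDivisors, a (m / d) * Yfun a lam d :=
        sum_congr rfl fun d hd => by
          rw [Yfun_eq_sum a lam (Nat.mem_properDivisors.mp hd).2, mul_sum]

theorem eq_mul_of_properDivisors_rec {R : Type*} [CommRing R] [IsDomain R] {a f g : ℕ → R}
    {μ : R} (hμ : μ ≠ 0) {n : ℕ}
    (hf : ∀ m, 2 ≤ m → m ≤ n → μ * f m = ∑ d ∈ m.properDivisors, a (m / d) * f d)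
    (hg : ∀ m, 2 ≤ m → m ≤ n → μ * g m = ∑ d ∈ m.properDivisors, a (m / d) * g d)
    (hg1 : g 1 = 1) {m : ℕ} (hm1 : 1 ≤ m) (hmn : m ≤ n) : f m = f 1 * g m := by
  induction m using Nat.strong_induction_on with
  | _ m ih =>
  rcases hm1.eq_or_lt with rfl | hm2
  · rw [hg1, mul_one]
  refine mul_left_cancel₀ hμ ?_
  rw [hf m hm2 hmn, mul_left_comm, hg m hm2 hmn, mul_sum]
  refine sum_congr rfl fun d hd => ?_
  obtain ⟨hdvd, hlt⟩ := Nat.mem_properDivisors.mp hd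
  rw [ih d hlt (Nat.pos_of_dvd_of_pos hdvd (by omega)) (by omega)]
  ring

theorem sum_fin_ite_dvd_eq_sum_divisors {M : Type*} [AddCommMonoid M] {n m : ℕ} (hm : m ≠ 0)
    (hmn : m ≤ n) (F : ℕ → M) :
    ∑ j : Fin n, (if j.val + 1 ∣ m then F (j.val + 1) else 0) = ∑ d ∈ m.divisors, F d := by
  have hdiv : m.divisors = (range (n + 1)).filter (· ∣ m) := by
    ext d
    simp only [Nat.mem_divisors, mem_filter, mem_range]
    exact ⟨fun ⟨h, _⟩ => ⟨by have := Nat.le_of_dvd (Nat.pos_of_ne_zero hm) h; omega, h⟩,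
      fun ⟨_, h⟩ => ⟨h, hm⟩⟩
  rw [Fin.sum_univ_eq_sum_range (fun j => if j + 1 ∣ m then F (j + 1) else 0), hdiv, sum_filter,
    sum_range_succ' _ n, if_neg (mt zero_dvd_iff.mp hm), add_zero]

theorem Amat_transpose_mulVec_apply_of_ne_zero {n : ℕ} {a : ℕ → ℂ} (ha : a 1 = 1)
    (w f : ℕ → ℂ) (i : Fin n) (hi : i.val ≠ 0) :
    ((Amat n a w)ᵀ *ᵥ fun j => f (j.val + 1)) i =
      f (i.val + 1) + ∑ d ∈ (i.val + 1).properDivisors, a ((i.val + 1) / d) * f d := by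
  have hentry : ∀ j : Fin n, (Amat n a w)ᵀ i j * f (j.val + 1) =
      if j.val + 1 ∣ i.val + 1 then a ((i.val + 1) / (j.val + 1)) * f (j.val + 1) else 0 := by
    intro j
    simp [Amat, Wmat, Dmat, hi, ite_mul]
  rw [mulVec, dotProduct, sum_congr rfl fun j _ => hentry j,
    sum_fin_ite_dvd_eq_sum_divisors (Nat.add_one_ne_zero _) i.isLt
      fun d => a ((i.val + 1) / d) * f d,
    ← Nat.insert_self_properDivisors (Nat.add_one_ne_zero _),
    sum_insert Nat.self_notMem_properDivisors,
    Nat.div_self (Nat.add_one_pos _), ha, one_mul]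

theorem properDivisors_rec_of_Amat_transpose_mulVec_eq_smul {n : ℕ} {a : ℕ → ℂ} (ha : a 1 = 1)
    {w f : ℕ → ℂ} {lam : ℂ}
    (hf : (Amat n a w)ᵀ *ᵥ (fun j : Fin n => f (j.val + 1)) =
      lam • fun j : Fin n => f (j.val + 1))
    {m : ℕ} (hm : 2 ≤ m) (hmn : m ≤ n) :
    (lam - 1) * f m = ∑ d ∈ m.properDivisors, a (m / d) * f d := by
  have hrow := congrFun hf ⟨m - 1, by omega⟩
  rw [Amat_transpose_mulVec_apply_of_ne_zero ha w f _ (by simp only; omega)] at hrow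
  simp only [Nat.sub_add_cancel (by omega : 1 ≤ m), Pi.smul_apply, smul_eq_mul] at hrow
  linear_combination -hrow

theorem exists_eq_smul_Yfun_of_Amat_transpose_mulVec_eq_smul {n : ℕ} {a w : ℕ → ℂ}
    (ha : a 1 = 1) {lam : ℂ} (hlam : lam ≠ 1) {x : Fin n → ℂ}
    (hx : (Amat n a w)ᵀ *ᵥ x = lam • x) :
    ∃ c : ℂ, x = c • fun j : Fin n => Yfun a lam (j.val + 1) := by
  obtain ⟨f, rfl⟩ : ∃ f : ℕ → ℂ, x = fun j : Fin n => f (j.val + 1) :=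
    ⟨fun m => if h : m - 1 < n then x ⟨m - 1, h⟩ else 0, by ext j; simp⟩
  refine ⟨f 1, funext fun j => ?_⟩
  exact eq_mul_of_properDivisors_rec (sub_ne_zero.mpr hlam)
    (fun m hm hmn => properDivisors_rec_of_Amat_transpose_mulVec_eq_smul ha hx hm hmn)
    (fun m hm _ => Yfun_rec a hlam hm) (Yfun_one a lam) (by omega) j.isLt

theorem eigenvector_Amat_transpose_general (n : ℕ) (a w : ℕ → ℂ) (ha : a 1 = 1)
    (lam : ℂ) (hlam : lam ≠ 1) (heig : lam ∈ spectrum ℂ (Amat n a w)) :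
    (fun j : Fin n => Yfun a lam (j.val + 1)) ≠ 0 ∧
    (Amat n a w).transpose.mulVec (fun j : Fin n => Yfun a lam (j.val + 1)) =
      lam • (fun j : Fin n => Yfun a lam (j.val + 1)) ∧
    ∀ x : Fin n → ℂ, (Amat n a w).transpose.mulVec x = lam • x →
      ∃ c : ℂ, x = c • (fun j : Fin n => Yfun a lam (j.val + 1)) := by
  have hspan : ∀ x : Fin n → ℂ, (Amat n a w)ᵀ *ᵥ x = lam • x →
      ∃ c : ℂ, x = c • fun j : Fin n => Yfun a lam (j.val + 1) :=
    fun x hx => exists_eq_smul_Yfun_of_Amat_transpose_mulVec_eq_smul ha hlam hx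
  obtain ⟨x, hx0, hx⟩ := exists_transpose_mulVec_eq_smul_of_mem_spectrum heig
  obtain ⟨c, rfl⟩ := hspan x hx
  have hc : c ≠ 0 := by rintro rfl; exact hx0 (zero_smul _ _)
  refine ⟨right_ne_zero_of_smul hx0, ?_, hspan⟩
  rw [mulVec_smul, smul_comm] at hx
  exact smul_right_injective _ hc hx

/-- If `λ ≠ 1` is an eigenvalue of `A_n`, then the vector `v` with `v_j = Y(j)` for
`1 ≤ j ≤ n` is nonzero, satisfies `A_nᵀ v = λ v`, and spans the one-dimensional
`λ`-eigenspace of `A_nᵀ`. -/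
theorem eigenvector_Amat_transpose (n : ℕ) (hn : 2 ≤ n) (a w : ℕ → ℂ) (ha : a 1 = 1)
    (hw : w 1 = 1) (lam : ℂ) (hlam : lam ≠ 1) (heig : lam ∈ spectrum ℂ (Amat n a w)) :
    (fun j : Fin n => Yfun a lam (j.val + 1)) ≠ 0 ∧
    (Amat n a w).transpose.mulVec (fun j : Fin n => Yfun a lam (j.val + 1)) =
      lam • (fun j : Fin n => Yfun a lam (j.val + 1)) ∧
    ∀ x : Fin n → ℂ, (Amat n a w).transpose.mulVec x = lam • x →
      ∃ c : ℂ, x = c • (fun j : Fin n => Yfun a lam (j.val + 1)) :=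
  eigenvector_Amat_transpose_general n a w ha lam hlam heig
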